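/- For every p ∈ (1,∞) there exists a constant C' > 0 such that for all a, b ∈ ℝ with (a,b) ≠ (0,0) and every λ ∈ [0,1]: | b^⟨p−1⟩ − a^⟨p−1⟩ | ≤ C' |b−a|^λ (|b|+|a|)^{p−1−λ}. -/

import Mathlib

open MeasureTheory Real Filter Topology
open scoped ENNReal NNReal

noncomputable section

/-- The signed power `a^⟨k⟩ := |a|^k sgn a` (with `0^k := 0`). -/
def sgnPow (a k : ℝ) : ℝ := |a| ^ k * Real.sign a

/-- The Bregman divergence `F_p(a,b) := |b|^p - |a|^p - p a^⟨p-1⟩ (b-a)`. -/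
def bregmanF (p a b : ℝ) : ℝ := |b| ^ p - |a| ^ p - p * sgnPow a (p - 1) * (b - a)

/-- The constant `A_{d,-α} = 2^α Γ((d+α)/2) π^{-d/2} / |Γ(-α/2)|`. -/
def coefA (d : ℕ) (α : ℝ) : ℝ :=
  2 ^ α * Real.Gamma (((d : ℝ) + α) / 2) * Real.pi ^ (-(d : ℝ) / 2) / |Real.Gamma (-α / 2)|

/-- The kernel `ν(x,y) = A_{d,-α} |x-y|^{-d-α}` of the fractional Laplacian. -/
def nuK (d : ℕ) (α : ℝ) (x y : EuclideanSpace ℝ (Fin d)) : ℝ :=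
  coefA d α * ‖x - y‖ ^ (-(d : ℝ) - α)

/-- The Hardy constant `κ_β`.  Note that `Real.Gamma 0 = 0` and division by `0` is `0`
in Lean, so this formula automatically gives `κ_0 = 0` and `κ_{d-α} = 0`. -/
def kappaC (d : ℕ) (α β : ℝ) : ℝ :=
  2 ^ α * Real.Gamma ((β + α) / 2) * Real.Gamma (((d : ℝ) - β) / 2) /
    (Real.Gamma (β / 2) * Real.Gamma (((d : ℝ) - β - α) / 2))

/-- The Sobolev–Bregman form `E_p[u]`, an element of `[0,∞]`
(the integrand is nonnegative). -/
def formEp (d : ℕ) (α p : ℝ) (u : EuclideanSpace ℝ (Fin d) → ℝ) : ℝ≥0∞ :=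
  (1 / 2) * ∫⁻ x, ∫⁻ y, ENNReal.ofReal
    ((u x - u y) * (sgnPow (u x) (p - 1) - sgnPow (u y) (p - 1)) * nuK d α x y)

/-- The Hardy integral `∫ |u(x)|^p |x|^{-α} dx`, an element of `[0,∞]`. -/
def hardyI (d : ℕ) (α p : ℝ) (u : EuclideanSpace ℝ (Fin d) → ℝ) : ℝ≥0∞ :=
  ∫⁻ x, ENNReal.ofReal (|u x| ^ p * ‖x‖ ^ (-α))

end

lemma sgnPow_of_nonneg {q a : ℝ} (hq : 0 < q) (ha : 0 ≤ a) : sgnPow a q = a ^ q := by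
  rcases ha.eq_or_lt with rfl | ha'
  · simp [sgnPow, Real.sign_zero, Real.zero_rpow hq.ne']
  · simp [sgnPow, Real.sign_of_pos ha', abs_of_pos ha']

lemma sgnPow_neg (a q : ℝ) : sgnPow (-a) q = - sgnPow a q := by
  rw [sgnPow, sgnPow, abs_neg, Real.sign_neg]; ring

lemma abs_sgnPow (a q : ℝ) : |sgnPow a q| ≤ |a| ^ q := by
  rw [sgnPow, abs_mul, abs_of_nonneg (Real.rpow_nonneg (abs_nonneg a) q)]
  have h : |Real.sign a| ≤ 1 := by
    rcases Real.sign_apply_eq a with h | h | h <;> simp [h]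
  nlinarith [Real.rpow_nonneg (abs_nonneg a) q]

set_option maxHeartbeats 400000 in
lemma powA {q : ℝ} (hq : 0 < q) {a b : ℝ} (ha : 0 ≤ a) (hab : a ≤ b) :
    b ^ q - a ^ q ≤ max q 1 * (b - a) * b ^ (q - 1) := by
  have hb : 0 ≤ b := ha.trans hab
  rcases hb.eq_or_lt with rfl | hb'
  · have : a = 0 := le_antisymm hab ha
    simp [this, Real.zero_rpow hq.ne']
  -- b > 0
  have hbq : b ^ q = b * b ^ (q - 1) := by
    have h := Real.rpow_add hb' 1 (q - 1)
    rw [show (1:ℝ) + (q - 1) = q by ring, Real.rpow_one] at h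
    exact h
  have hbq1 : 0 ≤ b ^ (q - 1) := Real.rpow_nonneg hb _
  rcases le_or_gt 1 q with h1 | h1
  · -- Bernoulli
    have hs : -1 ≤ a / b - 1 := by
      have : 0 ≤ a / b := div_nonneg ha hb
      linarith
    have hber := one_add_mul_self_le_rpow_one_add hs h1
    rw [show 1 + (a / b - 1) = a / b by ring] at hber
    have hdiv : (a / b) ^ q = a ^ q / b ^ q := Real.div_rpow ha hb q
    rw [hdiv] at hber
    have hbqpos : 0 < b ^ q := Real.rpow_pos_of_pos hb' q
    have key : b ^ q - a ^ q ≤ q * (b - a) * b ^ (q - 1) := by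
      have h2 : (1 + q * (a / b - 1)) * b ^ q ≤ a ^ q / b ^ q * b ^ q :=
        mul_le_mul_of_nonneg_right hber hbqpos.le
      rw [div_mul_cancel₀ _ hbqpos.ne'] at h2
      have h3 : q * (a / b - 1) * b ^ q = q * (a - b) * b ^ (q - 1) := by
        field_simp
        rw [hbq]; ring
      nlinarith [h2, h3]
    calc b ^ q - a ^ q ≤ q * (b - a) * b ^ (q - 1) := key
      _ ≤ max q 1 * (b - a) * b ^ (q - 1) := by
          have : q ≤ max q 1 := le_max_left _ _
          have hba : 0 ≤ b - a := by linarith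
          gcongr
  · -- q < 1
    have key : b ^ q - a ^ q ≤ 1 * (b - a) * b ^ (q - 1) := by
      rcases ha.eq_or_lt with rfl | ha'
      · rw [Real.zero_rpow hq.ne']; rw [hbq]; ring_nf; simp
      · have hθ1 : a / b ≤ 1 := (div_le_one hb').mpr hab
        have hθ0 : 0 < a / b := div_pos ha' hb'
        have hm : (a / b) ^ (1:ℝ) ≤ (a / b) ^ q :=
          Real.rpow_le_rpow_of_exponent_ge hθ0 hθ1 h1.le
        rw [Real.rpow_one, Real.div_rpow ha hb] at hm
        have hbqpos : 0 < b ^ q := Real.rpow_pos_of_pos hb' q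
        have h2 : a / b * b ^ q ≤ a ^ q := by
          have h4 := mul_le_mul_of_nonneg_right hm hbqpos.le
          rwa [div_mul_cancel₀ _ hbqpos.ne'] at h4
        have h3 : a / b * b ^ q = a * b ^ (q - 1) := by
          rw [hbq]; field_simp
        nlinarith [h2, h3]
    calc b ^ q - a ^ q ≤ 1 * (b - a) * b ^ (q - 1) := key
      _ ≤ max q 1 * (b - a) * b ^ (q - 1) := by
          have h5 : (1:ℝ) ≤ max q 1 := le_max_right _ _
          have hba : 0 ≤ b - a := by linarith
          gcongr

noncomputable def M1c (q : ℝ) : ℝ := 2 * max q 1 * max ((2:ℝ) ^ (1 - q)) 1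

lemma M1c_ge_two {q : ℝ} : 2 ≤ M1c q := by
  have h1 : (1:ℝ) ≤ max q 1 := le_max_right _ _
  have h2 : (1:ℝ) ≤ max ((2:ℝ) ^ (1 - q)) 1 := le_max_right _ _
  rw [M1c]
  nlinarith

lemma lemma1pos {q : ℝ} (hq : 0 < q) {a b : ℝ} (ha : 0 ≤ a) (hab : a ≤ b) :
    |sgnPow b q - sgnPow a q| ≤ M1c q * |b - a| * (|b| + |a|) ^ (q - 1) := by
  rcases hab.eq_or_lt with rfl | hab'
  · simp only [sub_self, abs_zero, mul_zero, zero_mul]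
    positivity
  have hb : 0 < b := lt_of_le_of_lt ha hab'
  have hS : 0 < b + a := by linarith
  rw [sgnPow_of_nonneg hq ha, sgnPow_of_nonneg hq hb.le,
    abs_of_nonneg (by linarith [Real.rpow_le_rpow ha hab hq.le] : (0:ℝ) ≤ b ^ q - a ^ q),
    abs_of_nonneg (by linarith : (0:ℝ) ≤ b - a), abs_of_nonneg hb.le, abs_of_nonneg ha]
  have hstep : b ^ (q - 1) ≤ max ((2:ℝ) ^ (1 - q)) 1 * (b + a) ^ (q - 1) := by
    have hSq : 0 ≤ (b + a) ^ (q - 1) := Real.rpow_nonneg hS.le _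
    rcases le_or_gt 1 q with h1 | h1
    · have h2 : b ^ (q - 1) ≤ (b + a) ^ (q - 1) :=
        Real.rpow_le_rpow hb.le (by linarith) (by linarith)
      have h3 : (1:ℝ) ≤ max ((2:ℝ) ^ (1 - q)) 1 := le_max_right _ _
      nlinarith
    · have h2b : (2 * b) ^ (q - 1) ≤ (b + a) ^ (q - 1) :=
        Real.rpow_le_rpow_of_nonpos hS (by linarith) (by linarith)
      have hmul : (2 * b) ^ (q - 1) = 2 ^ (q - 1) * b ^ (q - 1) :=
        Real.mul_rpow (by norm_num) hb.le
      have hinv : (2:ℝ) ^ (1 - q) * 2 ^ (q - 1) = 1 := by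
        rw [← Real.rpow_add (by norm_num : (0:ℝ) < 2)]
        norm_num
      have h4 : (2:ℝ) ^ (1 - q) * (2 * b) ^ (q - 1) ≤ (2:ℝ) ^ (1 - q) * (b + a) ^ (q - 1) :=
        mul_le_mul_of_nonneg_left h2b (Real.rpow_nonneg (by norm_num) _)
      have h5 : (2:ℝ) ^ (1 - q) ≤ max ((2:ℝ) ^ (1 - q)) 1 := le_max_left _ _
      rw [hmul, ← mul_assoc, hinv, one_mul] at h4
      nlinarith [Real.rpow_nonneg (show (0:ℝ) ≤ 2 by norm_num) (1 - q)]
  calc b ^ q - a ^ q ≤ max q 1 * (b - a) * b ^ (q - 1) := powA hq ha hab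
    _ ≤ max q 1 * (b - a) * (max ((2:ℝ) ^ (1 - q)) 1 * (b + a) ^ (q - 1)) := by
        have hmq : (0:ℝ) ≤ max q 1 := le_trans zero_le_one (le_max_right _ _)
        have hba : (0:ℝ) ≤ b - a := by linarith
        exact mul_le_mul_of_nonneg_left hstep (by positivity)
    _ ≤ M1c q * (b - a) * (b + a) ^ (q - 1) := by
        rw [M1c]
        have hSq : 0 ≤ (b + a) ^ (q - 1) := Real.rpow_nonneg hS.le _
        have hmq : (1:ℝ) ≤ max q 1 := le_max_right _ _
        have hmf : (1:ℝ) ≤ max ((2:ℝ) ^ (1 - q)) 1 := le_max_right _ _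
        nlinarith [mul_nonneg (mul_nonneg (by linarith : (0:ℝ) ≤ max q 1)
          (by linarith : (0:ℝ) ≤ b - a)) hSq,
          mul_nonneg (by linarith : (0:ℝ) ≤ (b-a)) hSq]

lemma lemma1 {q : ℝ} (hq : 0 < q) (a b : ℝ) :
    |sgnPow b q - sgnPow a q| ≤ M1c q * |b - a| * (|b| + |a|) ^ (q - 1) := by
  wlog hab : a ≤ b with H
  · have h := H hq b a (le_of_not_ge hab)
    rw [abs_sub_comm (sgnPow a q), abs_sub_comm a b, add_comm |a| |b|] at h
    exact h
  rcases le_or_gt 0 a with ha | ha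
  · exact lemma1pos hq ha hab
  rcases le_or_gt b 0 with hb | hb
  · -- a ≤ b ≤ 0
    have h := lemma1pos hq (by linarith : (0:ℝ) ≤ -b) (by linarith : -b ≤ -a)
    rw [sgnPow_neg, sgnPow_neg, abs_neg, abs_neg] at h
    have e1 : |(-(sgnPow a q)) - (-(sgnPow b q))| = |sgnPow b q - sgnPow a q| := by
      rw [show (-(sgnPow a q)) - (-(sgnPow b q)) = sgnPow b q - sgnPow a q by ring]
    have e2 : |(-a) - (-b)| = |b - a| := by rw [show (-a) - (-b) = -(a - b) by ring, abs_neg, abs_sub_comm]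
    rw [e1, e2, add_comm |a| |b|] at h
    exact h
  · -- a < 0 < b
    have hS : (0:ℝ) < b - a := by linarith
    have hb' : sgnPow b q = b ^ q := sgnPow_of_nonneg hq hb.le
    have ha' : sgnPow a q = -((-a) ^ q) := by
      have h := sgnPow_neg (-a) q
      rw [neg_neg] at h
      rw [h, sgnPow_of_nonneg hq (by linarith : (0:ℝ) ≤ -a)]
    have hbs : b ^ q ≤ (b - a) ^ q := Real.rpow_le_rpow hb.le (by linarith) hq.le
    have has : (-a) ^ q ≤ (b - a) ^ q := Real.rpow_le_rpow (by linarith) (by linarith) hq.le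
    have hsplit : (b - a) ^ q = (b - a) * (b - a) ^ (q - 1) := by
      have h := Real.rpow_add hS 1 (q - 1)
      rw [show (1:ℝ) + (q - 1) = q by ring, Real.rpow_one] at h
      exact h
    have habs : |b| + |a| = b - a := by
      rw [abs_of_pos hb, abs_of_neg ha]; ring
    have hD : |b - a| = b - a := abs_of_pos hS
    rw [hb', ha', habs, hD]
    have hLHS : |b ^ q - -((-a) ^ q)| = b ^ q + (-a) ^ q := by
      rw [sub_neg_eq_add, abs_of_nonneg (add_nonneg (Real.rpow_nonneg hb.le q)
        (Real.rpow_nonneg (by linarith : (0:ℝ) ≤ -a) q))]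
    rw [hLHS]
    have hSq : 0 ≤ (b - a) ^ (q - 1) := Real.rpow_nonneg hS.le _
    calc b ^ q + (-a) ^ q ≤ 2 * ((b - a) ^ q) := by linarith
      _ = 2 * (b - a) * (b - a) ^ (q - 1) := by rw [hsplit]; ring
      _ ≤ M1c q * (b - a) * (b - a) ^ (q - 1) := by
          have h2 := M1c_ge_two (q := q)
          nlinarith [mul_nonneg (mul_nonneg (by linarith : (0:ℝ) ≤ M1c q - 2) hS.le) hSq]

lemma lemma0aux {q : ℝ} (hq : 0 < q) (a b : ℝ) :
    |sgnPow b q - sgnPow a q| ≤ 2 * (|b| + |a|) ^ q := by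
  have h1 : |b| ^ q ≤ (|b| + |a|) ^ q :=
    Real.rpow_le_rpow (abs_nonneg _) (by linarith [abs_nonneg a]) hq.le
  have h2 : |a| ^ q ≤ (|b| + |a|) ^ q :=
    Real.rpow_le_rpow (abs_nonneg _) (by linarith [abs_nonneg b]) hq.le
  calc |sgnPow b q - sgnPow a q| ≤ |sgnPow b q| + |sgnPow a q| := abs_sub _ _
    _ ≤ |b| ^ q + |a| ^ q := add_le_add (abs_sgnPow b q) (abs_sgnPow a q)
    _ ≤ 2 * (|b| + |a|) ^ q := by linarith


/-- Hölder-type bound for the map `a ↦ a^⟨p-1⟩` with exponent `λ ∈ [0,1]`. -/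
theorem sgnPow_diff_bound (p : ℝ) (hp : 1 < p) :
    ∃ C' : ℝ, 0 < C' ∧ ∀ a b lam : ℝ, ¬(a = 0 ∧ b = 0) → lam ∈ Set.Icc (0 : ℝ) 1 →
      |sgnPow b (p - 1) - sgnPow a (p - 1)| ≤
        C' * |b - a| ^ lam * (|b| + |a|) ^ (p - 1 - lam) := by
  set q : ℝ := p - 1 with hq'
  have hq : 0 < q := by simp [hq']; linarith
  have hC : 0 < M1c q := lt_of_lt_of_le two_pos M1c_ge_two
  refine ⟨M1c q, hC, fun a b lam hab hlam => ?_⟩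
  obtain ⟨hl0, hl1⟩ := hlam
  set X := |sgnPow b q - sgnPow a q| with hX'
  set D := |b - a| with hD'
  set S := |b| + |a| with hS'
  have hX : 0 ≤ X := abs_nonneg _
  have hD : 0 ≤ D := abs_nonneg _
  have hS : 0 < S := by
    rcases not_and_or.mp hab with h | h
    · have : 0 < |a| := abs_pos.mpr h
      have := abs_nonneg b; simp only [hS']; linarith
    · have : 0 < |b| := abs_pos.mpr h
      have := abs_nonneg a; simp only [hS']; linarith
  have h0 : X ≤ M1c q * S ^ q := by
    calc X ≤ 2 * S ^ q := lemma0aux hq a b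
      _ ≤ M1c q * S ^ q :=
        mul_le_mul_of_nonneg_right M1c_ge_two (Real.rpow_nonneg hS.le _)
  have h1 : X ≤ M1c q * D * S ^ (q - 1) := lemma1 hq a b
  have hx : X = X ^ (1 - lam) * X ^ lam := by
    rw [← Real.rpow_add' hX (by rw [show (1 - lam) + lam = 1 by ring]; exact one_ne_zero),
      show (1 - lam) + lam = 1 by ring, Real.rpow_one]
  have hRHS1 : 0 ≤ M1c q * S ^ q := by positivity
  have hRHS2 : 0 ≤ M1c q * D * S ^ (q - 1) := by positivity
  have e1 : (M1c q * S ^ q) ^ (1 - lam) = M1c q ^ (1 - lam) * S ^ (q * (1 - lam)) := by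
    rw [Real.mul_rpow hC.le (Real.rpow_nonneg hS.le _), ← Real.rpow_mul hS.le]
  have e2 : (M1c q * D * S ^ (q - 1)) ^ lam = M1c q ^ lam * D ^ lam * S ^ ((q - 1) * lam) := by
    rw [Real.mul_rpow (mul_nonneg hC.le hD) (Real.rpow_nonneg hS.le _),
      Real.mul_rpow hC.le hD, ← Real.rpow_mul hS.le]
  have e3 : M1c q ^ (1 - lam) * M1c q ^ lam = M1c q := by
    rw [← Real.rpow_add hC, show (1 - lam) + lam = 1 by ring, Real.rpow_one]
  have e4 : S ^ (q * (1 - lam)) * S ^ ((q - 1) * lam) = S ^ (q - lam) := by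
    rw [← Real.rpow_add hS, show q * (1 - lam) + (q - 1) * lam = q - lam by ring]
  calc X = X ^ (1 - lam) * X ^ lam := hx
    _ ≤ (M1c q * S ^ q) ^ (1 - lam) * (M1c q * D * S ^ (q - 1)) ^ lam :=
        mul_le_mul (Real.rpow_le_rpow hX h0 (by linarith))
          (Real.rpow_le_rpow hX h1 hl0) (Real.rpow_nonneg hX _)
          (Real.rpow_nonneg hRHS1 _)
    _ = M1c q * D ^ lam * S ^ (q - lam) := by
        rw [e1, e2]
        conv_rhs => rw [← e3, ← e4]
        ring
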